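/- For z̄ ∈ S^2 and v ∈ R^3 with |v| ≤ P, and c ≥ 2P, the kernel K_T(z̄, v̂) = (1 + c^{-1} z̄·v̂)^{-2}(1 - c^{-2}|v̂|^2)(z̄ + c^{-1} v̂), with v̂ = (1+c^{-2}|v|^2)^{-1/2} v, satisfies |K_T(z̄,v̂) - (z̄ + c^{-1}[v - 2(z̄·v)z̄] + c^{-2}[3(z̄·v)^2 z̄ - |v|^2 z̄ - 2(z̄·v)v])| ≤ M c^{-3} for a constant M depending only on P. -/

import Mathlib

/-!
`KT c z̄ v` depends on `c` and `v` only through `x = c⁻¹ v`: `KT c z̄ v = KT 1 z̄ x`, and the claimed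
expansion is the second-order Taylor polynomial of `x ↦ KT 1 z̄ x` at `0`, evaluated at `c⁻¹ v`.
With `g = (1 + |x|²)^{-1/2}` one has `1 - |x̂|² = g²`, so
`KT 1 z̄ x = g² (1 + g σ)⁻² z̄ + g³ (1 + g σ)⁻² x` where `σ = z̄·x`. Expanding
`(1 + u)⁻² = 1 - 2u + 3u² + O(u³)` and using `1 - gⁿ ≤ n |x|²` bounds the error in the two
coefficients by `O(|x|³)` and `O(|x|²)` for `|x| ≤ 1/2`, i.e. the total error by `65 |x|³ ≤ 65 P³ c⁻³`.
-/

open Real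
open scoped RealInnerProductSpace

noncomputable section

abbrev E3 := EuclideanSpace ℝ (Fin 3)

/-- Relativistic velocity `v̂ = (1 + c⁻²|v|²)^{-1/2} v`. -/
def vhat (c : ℝ) (v : E3) : E3 := (Real.sqrt (1 + c⁻¹ ^ 2 * ‖v‖ ^ 2))⁻¹ • v

/-- The kernel `K_T(z̄, v̂) = (1 + c⁻¹ z̄·v̂)⁻² (1 - c⁻²|v̂|²)(z̄ + c⁻¹ v̂)`. -/
def KT (c : ℝ) (zb v : E3) : E3 :=
  (((1 + c⁻¹ * ⟪zb, vhat c v⟫)⁻¹) ^ 2 * (1 - c⁻¹ ^ 2 * ‖vhat c v‖ ^ 2)) •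
    (zb + c⁻¹ • vhat c v)

def lorentzFactorInv (t : ℝ) : ℝ := (√(1 + t ^ 2))⁻¹

section LorentzFactorInv

variable (t : ℝ)

lemma lorentzFactorInv_pos : 0 < lorentzFactorInv t := by
  unfold lorentzFactorInv; positivity

lemma lorentzFactorInv_sq_mul : lorentzFactorInv t ^ 2 * (1 + t ^ 2) = 1 := by
  rw [lorentzFactorInv, inv_pow, Real.sq_sqrt (by positivity)]
  exact inv_mul_cancel₀ (by positivity)

lemma lorentzFactorInv_le_one : lorentzFactorInv t ≤ 1 :=
  inv_le_one_of_one_le₀ (Real.one_le_sqrt.2 (by nlinarith))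

lemma abs_lorentzFactorInv_pow_le_one (n : ℕ) : |lorentzFactorInv t ^ n| ≤ 1 := by
  have hg0 := (lorentzFactorInv_pos t).le
  rw [abs_of_nonneg (pow_nonneg hg0 n)]
  exact pow_le_one₀ hg0 (lorentzFactorInv_le_one t)

lemma abs_lorentzFactorInv_pow_sub_one_le (n : ℕ) :
    |lorentzFactorInv t ^ n - 1| ≤ n * t ^ 2 := by
  set g := lorentzFactorInv t
  have hg0 := (lorentzFactorInv_pos t).le
  have hg1 := lorentzFactorInv_le_one t
  have hgt := lorentzFactorInv_sq_mul t
  have bernoulli := one_add_mul_sub_le_pow (by linarith : -1 ≤ g) n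
  have one_sub_le : 1 - g ≤ t ^ 2 :=
    calc 1 - g ≤ 1 - g ^ 2 := by nlinarith
      _ = t ^ 2 * g ^ 2 := by linear_combination -hgt
      _ ≤ t ^ 2 := mul_le_of_le_one_right (sq_nonneg t) (pow_le_one₀ hg0 hg1)
  rw [abs_of_nonpos (by linarith [pow_le_one₀ (n := n) hg0 hg1])]
  calc -(g ^ n - 1) ≤ n * (1 - g) := by linarith
    _ ≤ n * t ^ 2 := by gcongr

lemma abs_lorentzFactorInv_sq_sub_le : |lorentzFactorInv t ^ 2 - (1 - t ^ 2)| ≤ t ^ 4 := by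
  have hg0 := (lorentzFactorInv_pos t).le
  rw [show lorentzFactorInv t ^ 2 - (1 - t ^ 2) = t ^ 4 * lorentzFactorInv t ^ 2 by
    linear_combination (1 - t ^ 2) * lorentzFactorInv_sq_mul t]
  rw [abs_of_nonneg (by positivity)]
  exact mul_le_of_le_one_right (by positivity) (pow_le_one₀ hg0 (lorentzFactorInv_le_one t))

end LorentzFactorInv

lemma abs_inv_one_add_sq_sub_le {u : ℝ} (hu : |u| ≤ 1 / 2) :
    |((1 + u)⁻¹) ^ 2 - (1 - 2 * u + 3 * u ^ 2)| ≤ 24 * |u| ^ 3 := by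
  obtain ⟨hul, hur⟩ := abs_le.1 hu
  have hpos : 0 < 1 + u := by linarith
  have hinv : (1 + u)⁻¹ ≤ 2 := by rw [inv_le_comm₀ hpos (by norm_num)]; linarith
  have hinv_sq : ((1 + u)⁻¹) ^ 2 ≤ 4 := by nlinarith [inv_pos.2 hpos]
  have key : ((1 + u)⁻¹) ^ 2 - (1 - 2 * u + 3 * u ^ 2) =
      -(u ^ 3 * (4 + 3 * u) * ((1 + u)⁻¹) ^ 2) := by
    field_simp; ring
  have h43 : |4 + 3 * u| ≤ 6 := abs_le.2 ⟨by linarith, by linarith⟩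
  rw [key, abs_neg, abs_mul, abs_mul, abs_pow, abs_pow, sq_abs]
  calc |u| ^ 3 * |4 + 3 * u| * ((1 + u)⁻¹) ^ 2 ≤ |u| ^ 3 * 6 * 4 := by gcongr
    _ = 24 * |u| ^ 3 := by ring

lemma abs_mul_le_of_abs_le {a b A B : ℝ} (ha : |a| ≤ A) (hb : |b| ≤ B) : |a * b| ≤ A * B := by
  rw [abs_mul]
  exact mul_le_mul ha hb (abs_nonneg b) ((abs_nonneg a).trans ha)

section Coefficients

variable {σ t : ℝ}

lemma abs_lorentzFactorInv_mul_le (hσ : |σ| ≤ t) : |lorentzFactorInv t * σ| ≤ t := by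
  rw [abs_mul, abs_of_pos (lorentzFactorInv_pos t)]
  exact (mul_le_of_le_one_left (abs_nonneg σ) (lorentzFactorInv_le_one t)).trans hσ

lemma abs_KT_one_zb_coeff_sub_le (hσ : |σ| ≤ t) (ht : t ≤ 1 / 2) :
    |lorentzFactorInv t ^ 2 * ((1 + lorentzFactorInv t * σ)⁻¹) ^ 2
      - (1 - 2 * σ + 3 * σ ^ 2 - t ^ 2)| ≤ 43 * t ^ 3 := by
  set g := lorentzFactorInv t
  set u := g * σ
  have ht0 : 0 ≤ t := (abs_nonneg σ).trans hσ
  have hu : |u| ≤ t := abs_lorentzFactorInv_mul_le hσ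
  have hX : |((1 + u)⁻¹) ^ 2 - (1 - 2 * u + 3 * u ^ 2)| ≤ 24 * t ^ 3 :=
    (abs_inv_one_add_sq_sub_le (hu.trans ht)).trans (by gcongr)
  have h1 := abs_mul_le_of_abs_le (abs_lorentzFactorInv_pow_le_one t 2) hX
  have h2 := abs_lorentzFactorInv_sq_sub_le t
  have h3 := abs_mul_le_of_abs_le (abs_mul_le_of_abs_le abs_two.le hσ)
    (abs_lorentzFactorInv_pow_sub_one_le t 3)
  have h4 := abs_mul_le_of_abs_le (abs_mul_le_of_abs_le (abs_of_pos three_pos).le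
    (by rw [abs_pow]; gcongr : |σ ^ 2| ≤ t ^ 2)) (abs_lorentzFactorInv_pow_sub_one_le t 4)
  have ht4 : t ^ 4 ≤ t ^ 3 := pow_le_pow_of_le_one ht0 (by linarith) (by norm_num)
  rw [show g ^ 2 * ((1 + u)⁻¹) ^ 2 - (1 - 2 * σ + 3 * σ ^ 2 - t ^ 2) =
      g ^ 2 * (((1 + u)⁻¹) ^ 2 - (1 - 2 * u + 3 * u ^ 2)) + (g ^ 2 - (1 - t ^ 2))
        - 2 * σ * (g ^ 3 - 1) + 3 * σ ^ 2 * (g ^ 4 - 1) by ring]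
  push_cast at h3 h4
  rw [abs_le] at h1 h2 h3 h4 ⊢
  constructor <;> linarith

lemma abs_KT_one_x_coeff_sub_le (hσ : |σ| ≤ t) (ht : t ≤ 1 / 2) :
    |lorentzFactorInv t ^ 3 * ((1 + lorentzFactorInv t * σ)⁻¹) ^ 2 - (1 - 2 * σ)|
      ≤ 22 * t ^ 2 := by
  set g := lorentzFactorInv t
  set u := g * σ
  have ht0 : 0 ≤ t := (abs_nonneg σ).trans hσ
  have hu : |u| ≤ t := abs_lorentzFactorInv_mul_le hσ
  have hu2 : u ^ 2 ≤ t ^ 2 := sq_le_sq' (abs_le.1 hu).1 (abs_le.1 hu).2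
  have ht3 : t ^ 3 ≤ t ^ 2 / 2 := by nlinarith
  have hX : |((1 + u)⁻¹) ^ 2 - (1 - 2 * u)| ≤ 15 * t ^ 2 := by
    have := (abs_inv_one_add_sq_sub_le (hu.trans ht)).trans (by gcongr : 24 * |u| ^ 3 ≤ 24 * t ^ 3)
    rw [abs_le] at this ⊢
    constructor <;> linarith [sq_nonneg u]
  have h1 := abs_mul_le_of_abs_le (abs_lorentzFactorInv_pow_le_one t 3) hX
  have h2 := abs_lorentzFactorInv_pow_sub_one_le t 3
  have h3 := abs_mul_le_of_abs_le (abs_mul_le_of_abs_le abs_two.le hσ)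
    (abs_lorentzFactorInv_pow_sub_one_le t 4)
  rw [show g ^ 3 * ((1 + u)⁻¹) ^ 2 - (1 - 2 * σ) =
      g ^ 3 * (((1 + u)⁻¹) ^ 2 - (1 - 2 * u)) + (g ^ 3 - 1) - 2 * σ * (g ^ 4 - 1) by ring]
  push_cast at h2 h3
  rw [abs_le] at h1 h2 h3 ⊢
  constructor <;> linarith

end Coefficients

lemma vhat_one (x : E3) : vhat 1 x = lorentzFactorInv ‖x‖ • x := by
  simp [vhat, lorentzFactorInv]

lemma inv_smul_vhat (c : ℝ) (v : E3) : c⁻¹ • vhat c v = vhat 1 (c⁻¹ • v) := by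
  rw [vhat_one, vhat, lorentzFactorInv, norm_smul, Real.norm_eq_abs, mul_pow, sq_abs, smul_comm]

lemma KT_eq_KT_one_inv_smul (c : ℝ) (zb v : E3) : KT c zb v = KT 1 zb (c⁻¹ • v) := by
  simp only [KT, ← inv_smul_vhat, inner_smul_right, norm_smul, Real.norm_eq_abs, mul_pow, sq_abs,
    inv_one, one_pow, one_mul, one_smul]

lemma KT_one_eq (zb x : E3) :
    KT 1 zb x =
      (lorentzFactorInv ‖x‖ ^ 2 * ((1 + lorentzFactorInv ‖x‖ * ⟪zb, x⟫)⁻¹) ^ 2) • zb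
        + (lorentzFactorInv ‖x‖ ^ 3 * ((1 + lorentzFactorInv ‖x‖ * ⟪zb, x⟫)⁻¹) ^ 2) • x := by
  have hg := lorentzFactorInv_sq_mul ‖x‖
  have hg0 := (lorentzFactorInv_pos ‖x‖).le
  have hfactor : 1 - ‖lorentzFactorInv ‖x‖ • x‖ ^ 2 = lorentzFactorInv ‖x‖ ^ 2 := by
    rw [norm_smul, Real.norm_of_nonneg hg0]
    linear_combination -hg
  rw [KT, vhat_one, inner_smul_right, inv_one, one_pow, one_mul, one_mul, one_smul, hfactor]
  module

def KTTaylor (zb x : E3) : E3 :=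
  zb + (x - (2 * ⟪zb, x⟫) • zb) + ((3 * ⟪zb, x⟫ ^ 2) • zb - ‖x‖ ^ 2 • zb - (2 * ⟪zb, x⟫) • x)

lemma KTTaylor_eq (zb x : E3) :
    KTTaylor zb x =
      (1 - 2 * ⟪zb, x⟫ + 3 * ⟪zb, x⟫ ^ 2 - ‖x‖ ^ 2) • zb + (1 - 2 * ⟪zb, x⟫) • x := by
  rw [KTTaylor]
  module

lemma KTTaylor_inv_smul (c : ℝ) (zb v : E3) :
    KTTaylor zb (c⁻¹ • v) =
      zb + c⁻¹ • (v - (2 * ⟪zb, v⟫) • zb)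
        + c⁻¹ ^ 2 • ((3 * ⟪zb, v⟫ ^ 2) • zb - ‖v‖ ^ 2 • zb - (2 * ⟪zb, v⟫) • v) := by
  simp only [KTTaylor, inner_smul_right, norm_smul, Real.norm_eq_abs, mul_pow, sq_abs]
  module

lemma norm_KT_one_sub_KTTaylor_le {zb x : E3} (hz : ‖zb‖ ≤ 1) (hx : ‖x‖ ≤ 1 / 2) :
    ‖KT 1 zb x - KTTaylor zb x‖ ≤ 65 * ‖x‖ ^ 3 := by
  have hσ : |⟪zb, x⟫| ≤ ‖x‖ :=
    (abs_real_inner_le_norm zb x).trans (mul_le_of_le_one_left (norm_nonneg x) hz)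
  have hzb := abs_KT_one_zb_coeff_sub_le hσ hx
  have hx' := abs_KT_one_x_coeff_sub_le hσ hx
  rw [KT_one_eq, KTTaylor_eq, add_sub_add_comm, ← sub_smul, ← sub_smul]
  calc _ ≤ ‖_ • zb‖ + ‖_ • x‖ := norm_add_le _ _
    _ ≤ 43 * ‖x‖ ^ 3 * 1 + 22 * ‖x‖ ^ 2 * ‖x‖ := by
      rw [norm_smul, norm_smul, Real.norm_eq_abs, Real.norm_eq_abs]
      gcongr
    _ = 65 * ‖x‖ ^ 3 := by ring

theorem KT_expansion (P : ℝ) (hP : 0 < P) :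
    ∃ M : ℝ, 0 < M ∧ ∀ c : ℝ, 1 ≤ c → 2 * P ≤ c →
      ∀ zb v : E3, ‖zb‖ = 1 → ‖v‖ ≤ P →
        ‖KT c zb v -
          (zb + c⁻¹ • (v - (2 * ⟪zb, v⟫) • zb)
            + c⁻¹ ^ 2 • ((3 * ⟪zb, v⟫ ^ 2) • zb - ‖v‖ ^ 2 • zb - (2 * ⟪zb, v⟫) • v))‖
          ≤ M * c⁻¹ ^ 3 := by
  refine ⟨65 * P ^ 3, by positivity, fun c _ hc zb v hz hv => ?_⟩
  have hc0 : 0 < c⁻¹ := inv_pos.2 (by linarith)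
  have hx : ‖c⁻¹ • v‖ = c⁻¹ * ‖v‖ := by rw [norm_smul, Real.norm_of_nonneg hc0.le]
  have hxP : ‖c⁻¹ • v‖ ≤ c⁻¹ * P := hx ▸ mul_le_mul_of_nonneg_left hv hc0.le
  have hx_half : ‖c⁻¹ • v‖ ≤ 1 / 2 :=
    hxP.trans (by rw [inv_mul_le_iff₀ (by linarith)]; linarith)
  rw [KT_eq_KT_one_inv_smul, ← KTTaylor_inv_smul]
  calc _ ≤ 65 * ‖c⁻¹ • v‖ ^ 3 := norm_KT_one_sub_KTTaylor_le hz.le hx_half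
    _ ≤ 65 * (c⁻¹ * P) ^ 3 := by gcongr
    _ = 65 * P ^ 3 * c⁻¹ ^ 3 := by ring
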